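/- The shuffle of two regular languages is regular: if L₁ and L₂ are languages over a finite alphabet recognized by DFAs with n₁ and n₂ states respectively, then the language ⋃_{w₁ ∈ L₁, w₂ ∈ L₂} shuffle w₁ w₂ is recognized by a DFA (in fact one with at most 2^(n₁·n₂) states, but regularity suffices). -/

import Mathlib

/-!
Run DFAs for `L₁` and `L₂` side by side: reading a letter, a nondeterministic machine advances
either the first or the second component. Its runs on `u` are exactly the ways of splitting `u`
into a shuffle of two words read by the two DFAs, so it accepts the shuffle of `L₁` and `L₂`,
and the subset construction makes it deterministic.
-/

def shuffle {A : Type*} : List A → List A → Set (List A)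
  | [], w => {w}
  | a :: w₁, [] => {a :: w₁}
  | a :: w₁, b :: w₂ =>
      (a :: ·) '' shuffle w₁ (b :: w₂) ∪ (b :: ·) '' shuffle (a :: w₁) w₂
  termination_by w₁ w₂ => w₁.length + w₂.length

def lshuffle {A : Type*} (L₁ L₂ : Set (List A)) : Set (List A) :=
  { u | ∃ w₁ ∈ L₁, ∃ w₂ ∈ L₂, u ∈ shuffle w₁ w₂ }

section Shuffle

variable {A : Type*}

@[simp]
lemma shuffle_nil_left (w : List A) : shuffle [] w = {w} := by
  cases w <;> simp [shuffle]

@[simp]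
lemma shuffle_nil_right (w : List A) : shuffle w [] = {w} := by
  cases w <;> simp [shuffle]

lemma nil_mem_shuffle_iff {w₁ w₂ : List A} : [] ∈ shuffle w₁ w₂ ↔ w₁ = [] ∧ w₂ = [] := by
  match w₁, w₂ with
  | [], w₂ => simp [eq_comm]
  | a :: w₁, [] => simp
  | a :: w₁, b :: w₂ => simp [shuffle]

lemma cons_mem_shuffle_iff {a : A} {u w₁ w₂ : List A} :
    a :: u ∈ shuffle w₁ w₂ ↔
      (∃ w₁', w₁ = a :: w₁' ∧ u ∈ shuffle w₁' w₂) ∨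
      (∃ w₂', w₂ = a :: w₂' ∧ u ∈ shuffle w₁ w₂') := by
  match w₁, w₂ with
  | [], w₂ => simp [eq_comm]
  | b :: w₁, [] => simp [eq_comm]
  | b :: w₁, c :: w₂ =>
    simp only [shuffle, Set.mem_union, Set.mem_image, List.cons.injEq]
    constructor
    · rintro (⟨x, hx, rfl, rfl⟩ | ⟨x, hx, rfl, rfl⟩)
      · exact Or.inl ⟨w₁, ⟨rfl, rfl⟩, hx⟩
      · exact Or.inr ⟨w₂, ⟨rfl, rfl⟩, hx⟩
    · rintro (⟨w₁', ⟨rfl, rfl⟩, hu⟩ | ⟨w₂', ⟨rfl, rfl⟩, hu⟩)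
      · exact Or.inl ⟨u, hu, rfl, rfl⟩
      · exact Or.inr ⟨u, hu, rfl, rfl⟩

lemma nil_mem_lshuffle_iff {L₁ L₂ : Set (List A)} :
    [] ∈ lshuffle L₁ L₂ ↔ [] ∈ L₁ ∧ [] ∈ L₂ := by
  simp only [lshuffle, Set.mem_ofPred_eq, nil_mem_shuffle_iff]
  constructor
  · rintro ⟨_, h₁, _, h₂, rfl, rfl⟩
    exact ⟨h₁, h₂⟩
  · rintro ⟨h₁, h₂⟩
    exact ⟨[], h₁, [], h₂, rfl, rfl⟩

lemma cons_mem_lshuffle_iff {a : A} {u : List A} {L₁ L₂ : Set (List A)} :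
    a :: u ∈ lshuffle L₁ L₂ ↔
      u ∈ lshuffle ((a :: ·) ⁻¹' L₁) L₂ ∨ u ∈ lshuffle L₁ ((a :: ·) ⁻¹' L₂) := by
  simp only [lshuffle, Set.mem_ofPred_eq, Set.mem_preimage, cons_mem_shuffle_iff]
  constructor
  · rintro ⟨_, h₁, w₂, h₂, ⟨w₁, rfl, hu⟩ | ⟨w₂, rfl, hu⟩⟩
    · exact Or.inl ⟨w₁, h₁, w₂, h₂, hu⟩
    · exact Or.inr ⟨_, h₁, w₂, h₂, hu⟩
  · rintro (⟨w₁, h₁, w₂, h₂, hu⟩ | ⟨w₁, h₁, w₂, h₂, hu⟩)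
    · exact ⟨a :: w₁, h₁, w₂, h₂, Or.inl ⟨w₁, rfl, hu⟩⟩
    · exact ⟨w₁, h₁, a :: w₂, h₂, Or.inr ⟨w₂, rfl, hu⟩⟩

end Shuffle

namespace DFA

variable {A σ₁ σ₂ : Type*} (M₁ : DFA A σ₁) (M₂ : DFA A σ₂)

def shuffleNFA : NFA A (σ₁ × σ₂) where
  step p a := {(M₁.step p.1 a, p.2), (p.1, M₂.step p.2 a)}
  start := {(M₁.start, M₂.start)}
  accept := M₁.accept ×ˢ M₂.accept

lemma mem_acceptsFrom_shuffleNFA {u : List A} {s : σ₁} {t : σ₂} :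
    u ∈ (M₁.shuffleNFA M₂).acceptsFrom {(s, t)} ↔
      u ∈ lshuffle (M₁.acceptsFrom s : Set (List A)) (M₂.acceptsFrom t) := by
  induction u generalizing s t with
  | nil =>
    calc [] ∈ (M₁.shuffleNFA M₂).acceptsFrom {(s, t)}
        ↔ s ∈ M₁.accept ∧ t ∈ M₂.accept := by simp [shuffleNFA]
      _ ↔ _ := (nil_mem_lshuffle_iff (L₁ := M₁.acceptsFrom s) (L₂ := M₂.acceptsFrom t)).symm
  | cons a u ih =>
    have hstep : (M₁.shuffleNFA M₂).step (s, t) a = {(M₁.step s a, t)} ∪ {(s, M₂.step t a)} :=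
      Set.insert_eq _ _
    calc a :: u ∈ (M₁.shuffleNFA M₂).acceptsFrom {(s, t)}
        ↔ u ∈ (M₁.shuffleNFA M₂).acceptsFrom {(M₁.step s a, t)} ∨
            u ∈ (M₁.shuffleNFA M₂).acceptsFrom {(s, M₂.step t a)} := by
          rw [NFA.cons_mem_acceptsFrom, NFA.stepSet_singleton, hstep, NFA.acceptsFrom_union]
          rfl
      _ ↔ _ := or_congr ih ih
      _ ↔ _ := (cons_mem_lshuffle_iff (a := a) (u := u) (L₁ := M₁.acceptsFrom s)
          (L₂ := M₂.acceptsFrom t)).symm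

lemma accepts_shuffleNFA :
    (M₁.shuffleNFA M₂).accepts = (lshuffle (M₁.accepts : Set (List A)) M₂.accepts : Language A) :=
  Set.ext fun _ => mem_acceptsFrom_shuffleNFA M₁ M₂

end DFA

theorem lshuffle_isRegular_general {A : Type*} (L₁ L₂ : Language A)
    (h₁ : L₁.IsRegular) (h₂ : L₂.IsRegular) :
    Language.IsRegular (lshuffle (L₁ : Set (List A)) L₂ : Language A) := by
  obtain ⟨σ₁, _, M₁, rfl⟩ := h₁
  obtain ⟨σ₂, _, M₂, rfl⟩ := h₂
  exact ⟨Set (σ₁ × σ₂), inferInstance, (M₁.shuffleNFA M₂).toDFA,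
    by rw [NFA.toDFA_correct, DFA.accepts_shuffleNFA]⟩

theorem lshuffle_isRegular {A : Type*} [Fintype A] (L₁ L₂ : Language A)
    (h₁ : L₁.IsRegular) (h₂ : L₂.IsRegular) :
    Language.IsRegular (lshuffle (L₁ : Set (List A)) L₂ : Language A) :=
  lshuffle_isRegular_general L₁ L₂ h₁ h₂
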